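/- arXiv:1612.00822 — 3 statements merged into one kernel-verified Lean document; each statement's English description precedes it below -/
import Mathlib

section
/- Let T be an invertible measure preserving transformation with index N_T satisfying 1 < N_T < ∞. Then for every ε > 0, C*_T((2N_T − 2)/(2N_T − 1) − ε) ≥ N_T/(N_T − 1). -/
open MeasureTheory Set ENNReal

noncomputable def ergAvg {Ω : Type*} (T : Equiv.Perm Ω) (E : Set Ω) (M N : ℤ) (ω : Ω) : ℝ :=
  (∑ j ∈ Finset.Icc M N, E.indicator (fun _ => (1:ℝ)) ((T ^ j) ω)) / ((N : ℝ) - (M : ℝ) + 1)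

/-- The two-sided ergodic maximal function `T*χ_E`. -/
noncomputable def ergMax {Ω : Type*} (T : Equiv.Perm Ω) (E : Set Ω) (ω : Ω) : ℝ :=
  ⨆ p : {p : ℤ × ℤ // p.1 ≤ 0 ∧ 0 ≤ p.2}, ergAvg T E p.1.1 p.1.2 ω
/-- The Tauberian constant `C*_T(α)` of the two-sided ergodic maximal operator. -/
noncomputable def ergTauber {Ω : Type*} [MeasurableSpace Ω] (μ : Measure Ω) (T : Equiv.Perm Ω)
    (α : ℝ) : ℝ≥0∞ :=
  ⨆ E : {E : Set Ω // MeasurableSet E ∧ 0 < μ E}, μ {ω | α < ergMax T E.1 ω} / μ E.1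
/-- `HasTower μ T N`: there is a set `A` of positive measure with `A, TA, …, T^{N-1}A`
pairwise disjoint.  The index `N_T` equals `N` iff `HasTower μ T N ∧ ¬ HasTower μ T (N+1)`,
and `N_T = ∞` iff `HasTower μ T N` holds for all `N`. -/
def HasTower {Ω : Type*} [MeasurableSpace Ω] (μ : Measure Ω) (T : Equiv.Perm Ω) (N : ℕ) : Prop :=
  ∃ A : Set Ω, MeasurableSet A ∧ 0 < μ A ∧
    ∀ i j : ℕ, i < N → j < N → i ≠ j → Disjoint ((⇑(T ^ i)) '' A) ((⇑(T ^ j)) '' A)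

lemma ergAvg_le_one {Ω : Type*} (T : Equiv.Perm Ω) (E : Set Ω) (M N : ℤ)
    (hM : M ≤ 0) (hN : 0 ≤ N) (ω : Ω) : ergAvg T E M N ω ≤ 1 := by
  have hM' : (M : ℝ) ≤ 0 := by exact_mod_cast hM
  have hN' : (0 : ℝ) ≤ (N : ℝ) := by exact_mod_cast hN
  have hden : (0:ℝ) < (N : ℝ) - (M : ℝ) + 1 := by linarith
  rw [ergAvg, div_le_one hden]
  calc ∑ j ∈ Finset.Icc M N, E.indicator (fun _ => (1:ℝ)) ((T ^ j) ω)
      ≤ ∑ _j ∈ Finset.Icc M N, (1:ℝ) := by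
        refine Finset.sum_le_sum fun j _ => ?_
        exact Set.indicator_apply_le' (fun _ => le_refl 1) (fun _ => zero_le_one)
    _ = ((Finset.Icc M N).card : ℝ) := by simp
    _ = (N : ℝ) - (M : ℝ) + 1 := by
        rw [Int.card_Icc]
        have h1 : (0:ℤ) ≤ N + 1 - M := by omega
        have h2 : (((N + 1 - M).toNat : ℤ) : ℝ) = ((N + 1 - M : ℤ) : ℝ) := by
          rw [Int.toNat_of_nonneg h1]
        push_cast at h2 ⊢
        linarith

lemma le_ergMax {Ω : Type*} (T : Equiv.Perm Ω) (E : Set Ω) (M N : ℤ)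
    (hM : M ≤ 0) (hN : 0 ≤ N) (ω : Ω) : ergAvg T E M N ω ≤ ergMax T E ω := by
  refine le_ciSup (f := fun p : {p : ℤ × ℤ // p.1 ≤ 0 ∧ 0 ≤ p.2} =>
    ergAvg T E p.1.1 p.1.2 ω) ?_ ⟨(M, N), hM, hN⟩
  refine ⟨1, ?_⟩
  rintro x ⟨⟨⟨M', N'⟩, hM', hN'⟩, rfl⟩
  exact ergAvg_le_one T E M' N' hM' hN' ω

/-- If `T` is an invertible measure preserving transformation of a probability space with index
`1 < N_T < ∞`, then for every `ε > 0`,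
`C*_T((2N_T − 2)/(2N_T − 1) − ε) ≥ N_T/(N_T − 1)`. -/
theorem stmt9 {Ω : Type*} [MeasurableSpace Ω] (μ : Measure Ω) [IsProbabilityMeasure μ]
    (T : Equiv.Perm Ω)
    (hT : MeasurePreserving (⇑T) μ μ) (hT' : MeasurePreserving (⇑T.symm) μ μ)
    (N : ℕ) (hN : 1 < N) (htower : HasTower μ T N) (hmax : ¬ HasTower μ T (N + 1))
    (ε : ℝ) (hε : 0 < ε) :
    ENNReal.ofReal ((N : ℝ) / ((N : ℝ) - 1)) ≤
      ergTauber μ T ((2 * (N : ℝ) - 2) / (2 * (N : ℝ) - 1) - ε) := by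
  set α : ℝ := (2 * (N : ℝ) - 2) / (2 * (N : ℝ) - 1) - ε with hαdef
  obtain ⟨A, hAm, hA0, hAdisj⟩ := htower
  have hmpz : ∀ k : ℤ, MeasurePreserving ⇑(T ^ k) μ μ := by
    intro k
    obtain ⟨n, rfl | rfl⟩ := k.eq_nat_or_neg
    · rw [zpow_natCast, Equiv.Perm.coe_pow]; exact hT.iterate n
    · rw [zpow_neg, zpow_natCast, ← inv_pow]
      have h : ⇑(T⁻¹ ^ n) = (⇑T.symm)^[n] := by rw [Equiv.Perm.coe_pow]; rfl
      rw [h]; exact hT'.iterate n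
  have hmpn : ∀ n : ℕ, MeasurePreserving ⇑(T ^ n) μ μ := by
    intro n; rw [Equiv.Perm.coe_pow]; exact hT.iterate n
  have happ : ∀ (a b : ℤ) (ω : Ω), (T ^ (a + b)) ω = (T ^ a) ((T ^ b) ω) := by
    intro a b ω; rw [zpow_add]; rfl
  have comp_pre : ∀ (a b : ℤ) (s : Set Ω),
      (⇑(T ^ (a + b)))⁻¹' s = (⇑(T ^ b))⁻¹' ((⇑(T ^ a))⁻¹' s) := by
    intro a b s; rw [zpow_add]; rfl
  -- pointwise tower disjointness of A
  have key : ∀ i : ℕ, 0 < i → i < N → ∀ x, x ∈ A → (T ^ i) x ∈ A → False := by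
    intro i hi1 hiN x hx hTx
    have hd := hAdisj 0 i (by omega) hiN (by omega)
    rw [pow_zero] at hd
    have h1 : (T ^ i) x ∈ (⇑(1 : Equiv.Perm Ω)) '' A := by simpa using hTx
    have h2 : (T ^ i) x ∈ (⇑(T ^ i)) '' A := ⟨x, hx, rfl⟩
    exact (Set.disjoint_left.mp hd h1) h2
  -- every positive measure subset of A returns under T^N
  have step1 : ∀ C : Set Ω, MeasurableSet C → C ⊆ A → 0 < μ C →
      0 < μ (C ∩ (⇑(T ^ N))⁻¹' C) := by
    intro C hCm hCA hC0
    by_contra h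
    push_neg at h
    have h0 : μ (C ∩ (⇑(T ^ N))⁻¹' C) = 0 := le_antisymm h zero_le
    set D := C \ (⇑(T ^ N))⁻¹' C with hD
    have hDm : MeasurableSet D := hCm.diff ((hmpn N).measurable hCm)
    have hD0 : 0 < μ D := by
      have h2 := measure_inter_add_diff C ((hmpn N).measurable hCm) (μ := μ)
      rw [h0, zero_add] at h2
      exact h2.symm ▸ hC0
    have main : ∀ i j : ℕ, i < j → j < N + 1 →
        Disjoint ((⇑(T ^ i)) '' D) ((⇑(T ^ j)) '' D) := by
      intro i j hij hjN
      rw [Set.disjoint_left]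
      rintro x ⟨a, ha, rfl⟩ ⟨b, hb, hba⟩
      have hk : (T ^ (j - i)) b = a := by
        have h3 : (T ^ i) ((T ^ (j - i)) b) = (T ^ i) a := by
          rw [← Equiv.Perm.mul_apply, ← pow_add, show i + (j - i) = j by omega]
          exact hba
        exact (T ^ i).injective h3
      rcases lt_or_eq_of_le (show j - i ≤ N by omega) with hlt | heq
      · exact key (j - i) (by omega) hlt b (hCA hb.1) (hk ▸ (hCA ha.1))
      · rw [heq] at hk
        exact hb.2 (Set.mem_preimage.mpr (hk.symm ▸ ha.1))
    refine hmax ⟨D, hDm, hD0, ?_⟩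
    intro i j hi hj hne
    rcases lt_or_gt_of_ne hne with h' | h'
    · exact main i j h' hj
    · exact (main j i h' hi).symm
  have preAm : MeasurableSet ((⇑(T ^ N))⁻¹' A) := (hmpn N).measurable hAm
  have step2 : μ (A \ (⇑(T ^ N))⁻¹' A) = 0 := by
    by_contra h
    have hpos : 0 < μ (A \ (⇑(T ^ N))⁻¹' A) := zero_lt_iff.mpr h
    have h1 := step1 _ (hAm.diff preAm) Set.diff_subset hpos
    have hempty : (A \ (⇑(T ^ N))⁻¹' A) ∩ (⇑(T ^ N))⁻¹' (A \ (⇑(T ^ N))⁻¹' A) = ∅ := by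
      ext x
      simp only [Set.mem_inter_iff, Set.mem_diff, Set.mem_preimage, Set.mem_empty_iff_false,
        iff_false, not_and]
      tauto
    rw [hempty] at h1
    simp at h1
  have step3 : (⇑(T ^ N))⁻¹' A =ᵐ[μ] A := by
    rw [MeasureTheory.ae_eq_set]
    refine ⟨?_, step2⟩
    have h1 : μ ((⇑(T ^ N))⁻¹' A) = μ A := (hmpn N).measure_preimage hAm.nullMeasurableSet
    have h2 := measure_inter_add_diff A preAm (μ := μ)
    have h3 := measure_inter_add_diff ((⇑(T ^ N))⁻¹' A) hAm (μ := μ)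
    rw [step2, add_zero] at h2
    rw [Set.inter_comm, h2, h1] at h3
    have hfin : μ A ≠ ⊤ := measure_ne_top μ A
    exact (ENNReal.add_right_inj hfin).mp (by rw [h3, add_zero])
  have hq : ∀ k : ℤ, Measure.QuasiMeasurePreserving ⇑(T ^ k) μ μ :=
    fun k => (hmpz k).quasiMeasurePreserving
  have step3' : (⇑(T ^ ((N:ℤ))))⁻¹' A =ᵐ[μ] A := by rw [zpow_natCast]; exact step3
  have step3'' : (⇑(T ^ (-(N:ℤ))))⁻¹' A =ᵐ[μ] A := by
    have h1 := (hq (-(N:ℤ))).preimage_ae_eq step3'.symm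
    rw [← comp_pre (N:ℤ) (-(N:ℤ)) A] at h1
    have h2 : (N:ℤ) + -(N:ℤ) = 0 := by ring
    rw [h2, zpow_zero, Equiv.Perm.coe_one, Set.preimage_id] at h1
    exact h1
  have aeeq : ∀ k : ℤ, (⇑(T ^ ((N:ℤ) * k)))⁻¹' A =ᵐ[μ] A := by
    intro k
    induction k using Int.induction_on with
    | zero => rw [mul_zero, zpow_zero, Equiv.Perm.coe_one, Set.preimage_id]; exact Filter.EventuallyEq.rfl
    | succ k ih =>
        rw [show (N:ℤ) * (k + 1) = (N:ℤ) + (N:ℤ) * k by ring, comp_pre]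
        exact ((hq ((N:ℤ) * k)).preimage_ae_eq step3').trans ih
    | pred k ih =>
        rw [show (N:ℤ) * (-k - 1) = -(N:ℤ) + (N:ℤ) * (-k) by ring, comp_pre]
        exact ((hq ((N:ℤ) * (-k))).preimage_ae_eq step3'').trans ih
  set A' : Set Ω := ⋂ k : ℤ, (⇑(T ^ ((N:ℤ) * k)))⁻¹' A with hA'def
  have hA'm : MeasurableSet A' := MeasurableSet.iInter fun k => (hmpz _).measurable hAm
  have hA'mem : ∀ ω : Ω, ω ∈ A' ↔ ∀ k : ℤ, (T ^ ((N:ℤ) * k)) ω ∈ A := by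
    intro ω; rw [hA'def]; exact Set.mem_iInter
  have hA'sub : A' ⊆ A := by
    intro x hx
    have h1 := (hA'mem x).mp hx 0
    rwa [mul_zero, zpow_zero, Equiv.Perm.one_apply] at h1
  have hA'null : μ (A \ A') = 0 := by
    have hsub : A \ A' ⊆ ⋃ k : ℤ, (A \ (⇑(T ^ ((N:ℤ) * k)))⁻¹' A) := by
      rintro x ⟨hxA, hxn⟩
      rw [hA'def] at hxn
      simp only [Set.mem_iInter, not_forall] at hxn
      obtain ⟨k, hk⟩ := hxn
      exact Set.mem_iUnion.mpr ⟨k, hxA, hk⟩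
    refine le_antisymm ?_ zero_le
    calc μ (A \ A') ≤ μ (⋃ k : ℤ, (A \ (⇑(T ^ ((N:ℤ) * k)))⁻¹' A)) := measure_mono hsub
      _ = 0 := measure_iUnion_null fun k => (MeasureTheory.ae_eq_set.mp (aeeq k)).2
  have hA'pos : 0 < μ A' := by
    have h2 := measure_inter_add_diff A hA'm (μ := μ)
    rw [Set.inter_eq_self_of_subset_right hA'sub, hA'null, add_zero] at h2
    rw [h2]; exact hA0
  have hA'fin : μ A' ≠ ⊤ := measure_ne_top μ A'
  have hA'inv : ∀ ω ∈ A', ∀ m : ℤ, (T ^ ((N:ℤ) * m)) ω ∈ A' := by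
    intro ω hω m
    rw [hA'mem]
    intro k
    rw [← happ, show (N:ℤ) * k + (N:ℤ) * m = (N:ℤ) * (k + m) by ring]
    exact (hA'mem ω).mp hω (k + m)
  have hA'disj : ∀ x ∈ A', ∀ k : ℤ, 1 ≤ k → k ≤ (N:ℤ) - 1 → (T ^ k) x ∈ A' → False := by
    intro x hx k hk1 hk2 hTx
    lift k to ℕ using (by omega : (0:ℤ) ≤ k) with k0
    rw [zpow_natCast] at hTx
    exact key k0 (by omega) (by omega) x (hA'sub hx) (hA'sub hTx)
  set Aset : ℤ → Set Ω := fun i => (⇑(T ^ (-i)))⁻¹' A' with hAsetdef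
  have hAsetm : ∀ i, MeasurableSet (Aset i) := fun i => (hmpz (-i)).measurable hA'm
  have hAsetμ : ∀ i, μ (Aset i) = μ A' :=
    fun i => (hmpz (-i)).measure_preimage hA'm.nullMeasurableSet
  have hAset0 : Aset 0 = A' := by
    rw [hAsetdef]
    simp only [neg_zero, zpow_zero, Equiv.Perm.coe_one, Set.preimage_id]
  have hAsetdisj : ∀ i j : ℤ, 0 ≤ i → i < j → j ≤ (N:ℤ) - 1 →
      ∀ x, x ∈ Aset i → x ∈ Aset j → False := by
    intro i j hi hij hj x hxi hxj
    rw [hAsetdef] at hxi hxj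
    refine hA'disj _ hxj (j - i) (by omega) (by omega) ?_
    rw [← happ, show j - i + -j = -i by ring]
    exact hxi
  set E : Set Ω := ⋃ i ∈ Finset.Icc (1:ℤ) ((N:ℤ) - 1), Aset i with hEdef
  have hEm : MeasurableSet E := by
    rw [hEdef]
    exact MeasurableSet.biUnion (Finset.Icc (1:ℤ) ((N:ℤ)-1)).countable_toSet
      (fun i _ => hAsetm i)
  have hEsub : ∀ i : ℤ, 1 ≤ i → i ≤ (N:ℤ) - 1 → Aset i ⊆ E := by
    intro i h1 h2 x hx
    rw [hEdef]
    exact Set.mem_biUnion (Finset.mem_Icc.mpr ⟨h1, h2⟩) hx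
  have h2N : (2:ℕ) ≤ N := hN
  have hEpos : 0 < μ E := by
    calc (0:ℝ≥0∞) < μ A' := hA'pos
      _ = μ (Aset 1) := (hAsetμ 1).symm
      _ ≤ μ E := measure_mono (hEsub 1 le_rfl (by omega))
  have hEle : μ E ≤ ((N - 1 : ℕ) : ℝ≥0∞) * μ A' := by
    rw [hEdef]
    calc μ (⋃ i ∈ Finset.Icc (1:ℤ) ((N:ℤ)-1), Aset i)
        ≤ ∑ i ∈ Finset.Icc (1:ℤ) ((N:ℤ)-1), μ (Aset i) := measure_biUnion_finset_le _ _
      _ = ((N - 1 : ℕ) : ℝ≥0∞) * μ A' := by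
          rw [Finset.sum_congr rfl (fun i _ => hAsetμ i), Finset.sum_const, nsmul_eq_mul,
            Int.card_Icc, show ((N:ℤ) - 1 + 1 - 1).toNat = N - 1 by omega]
  set B : Set Ω := ⋃ i ∈ Finset.Icc (0:ℤ) ((N:ℤ) - 1), Aset i with hBdef
  have hBμ : (N : ℝ≥0∞) * μ A' ≤ μ B := by
    rw [hBdef]
    rw [measure_biUnion_finset ?_ (fun i _ => hAsetm i)]
    · rw [Finset.sum_congr rfl (fun i _ => hAsetμ i), Finset.sum_const, nsmul_eq_mul,
        Int.card_Icc, show ((N:ℤ) - 1 + 1 - 0).toNat = N by omega]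
    · intro i hi j hj hij
      rw [Finset.coe_Icc, Set.mem_Icc] at hi hj
      have hdisj : ∀ a b : ℤ, 0 ≤ a → a < b → b ≤ (N:ℤ) - 1 → Disjoint (Aset a) (Aset b) := by
        intro a b ha hab hb
        rw [Set.disjoint_left]
        intro x hxa hxb
        exact hAsetdisj a b ha hab hb x hxa hxb
      rcases lt_or_gt_of_ne hij with h' | h'
      · exact hdisj i j hi.1 h' hj.2
      · exact (hdisj j i hj.1 h' hi.2).symm
  have hα1 : α < 1 := by
    rw [hαdef]
    have hNR : (2:ℝ) ≤ (N:ℝ) := by exact_mod_cast h2N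
    have hden : (0:ℝ) < 2*(N:ℝ) - 1 := by linarith
    have h1 : (2*(N:ℝ)-2)/(2*(N:ℝ)-1) < 1 := (div_lt_one hden).mpr (by linarith)
    linarith
  have hpoint1 : ∀ ω ∈ E, α < ergMax T E ω := by
    intro ω hω
    have h00 : ergAvg T E 0 0 ω = 1 := by
      simp [ergAvg, Set.indicator_of_mem hω]
    calc α < 1 := hα1
      _ = ergAvg T E 0 0 ω := h00.symm
      _ ≤ ergMax T E ω := le_ergMax T E 0 0 le_rfl le_rfl ω
  have hpoint2 : ∀ ω ∈ A', α < ergMax T E ω := by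
    intro ω hω
    set M : ℤ := -((N:ℤ) - 1) with hMdef
    set K : ℤ := (N:ℤ) - 1 with hKdef
    have hM : M ≤ 0 := by omega
    have hK : 0 ≤ K := by omega
    have hone : ∀ j : ℤ, j ∈ Finset.Icc M K → j ≠ 0 → (T ^ j) ω ∈ E := by
      intro j hj hj0
      rw [Finset.mem_Icc] at hj
      rcases lt_or_gt_of_ne hj0 with hneg | hpos
      · refine hEsub (j + (N:ℤ)) (by omega) (by omega) ?_
        show (T ^ (-(j + (N:ℤ)))) ((T ^ j) ω) ∈ A'
        rw [← happ, show -(j + (N:ℤ)) + j = (N:ℤ) * (-1) by ring]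
        exact hA'inv ω hω (-1)
      · refine hEsub j (by omega) (by omega) ?_
        show (T ^ (-j)) ((T ^ j) ω) ∈ A'
        rw [← happ, show -j + j = (0:ℤ) by ring, zpow_zero, Equiv.Perm.one_apply]
        exact hω
    have hcard : ((((Finset.Icc M K).erase 0).card : ℕ) : ℝ) = 2*(N:ℝ) - 2 := by
      rw [Finset.card_erase_of_mem (Finset.mem_Icc.mpr ⟨hM, hK⟩), Int.card_Icc,
        show (K + 1 - M).toNat = 2*N - 1 by omega, show 2*N - 1 - 1 = 2*N - 2 by omega,
        Nat.cast_sub (by omega : 2 ≤ 2*N)]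
      push_cast; ring
    have hsum : 2*(N:ℝ) - 2 ≤
        ∑ j ∈ Finset.Icc M K, E.indicator (fun _ => (1:ℝ)) ((T ^ j) ω) := by
      have h1 : ∀ j ∈ (Finset.Icc M K).erase 0,
          E.indicator (fun _ => (1:ℝ)) ((T ^ j) ω) = 1 := by
        intro j hj
        rw [Finset.mem_erase] at hj
        exact Set.indicator_of_mem (hone j hj.2 hj.1) _
      calc 2*(N:ℝ) - 2 = ((((Finset.Icc M K).erase 0).card : ℕ) : ℝ) := hcard.symm
        _ = ∑ j ∈ (Finset.Icc M K).erase 0, E.indicator (fun _ => (1:ℝ)) ((T ^ j) ω) := by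
            rw [Finset.sum_congr rfl h1, Finset.sum_const, nsmul_eq_mul, mul_one]
        _ ≤ ∑ j ∈ Finset.Icc M K, E.indicator (fun _ => (1:ℝ)) ((T ^ j) ω) :=
            Finset.sum_le_sum_of_subset_of_nonneg (Finset.erase_subset _ _)
              (fun j _ _ => Set.indicator_nonneg (fun _ _ => zero_le_one) _)
    have hNR : (2:ℝ) ≤ (N:ℝ) := by exact_mod_cast h2N
    have hdenpos : (0:ℝ) < 2*(N:ℝ) - 1 := by linarith
    have havg : (2*(N:ℝ)-2)/(2*(N:ℝ)-1) ≤ ergAvg T E M K ω := by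
      rw [ergAvg]
      have hden : ((K:ℤ):ℝ) - ((M:ℤ):ℝ) + 1 = 2*(N:ℝ) - 1 := by
        rw [hMdef, hKdef]; push_cast; ring
      rw [hden]
      exact div_le_div_of_nonneg_right hsum hdenpos.le
    calc α < (2*(N:ℝ)-2)/(2*(N:ℝ)-1) := by rw [hαdef]; linarith
      _ ≤ ergAvg T E M K ω := havg
      _ ≤ ergMax T E ω := le_ergMax T E M K hM hK ω
  have hBsub : B ⊆ {ω | α < ergMax T E ω} := by
    rw [hBdef]
    intro x hx
    rw [Set.mem_iUnion₂] at hx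
    obtain ⟨i, hi, hxi⟩ := hx
    rw [Finset.mem_Icc] at hi
    rcases eq_or_lt_of_le hi.1 with h0 | h0
    · rw [← h0, hAset0] at hxi
      exact hpoint2 x hxi
    · exact hpoint1 x (hEsub i h0 hi.2 hxi)
  have hμlevel : (N:ℝ≥0∞) * μ A' ≤ μ {ω | α < ergMax T E ω} :=
    hBμ.trans (measure_mono hBsub)
  have hfinal : (N : ℝ≥0∞) / ((N - 1 : ℕ) : ℝ≥0∞) ≤ ergTauber μ T α := by
    have h1 : ((N:ℝ≥0∞) * μ A') / (((N - 1 : ℕ) : ℝ≥0∞) * μ A')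
        ≤ μ {ω | α < ergMax T E ω} / μ E := ENNReal.div_le_div hμlevel hEle
    rw [ENNReal.mul_div_mul_right _ _ (ne_of_gt hA'pos) hA'fin] at h1
    refine h1.trans ?_
    exact le_iSup (f := fun E : {E : Set Ω // MeasurableSet E ∧ 0 < μ E} =>
      μ {ω | α < ergMax T E.1 ω} / μ E.1) ⟨E, hEm, hEpos⟩
  have hcast : ENNReal.ofReal ((N:ℝ)/((N:ℝ)-1)) = (N:ℝ≥0∞) / ((N - 1 : ℕ):ℝ≥0∞) := by
    have e1 : ((N:ℝ) - 1) = ((N - 1 : ℕ) : ℝ) := by rw [Nat.cast_sub hN.le, Nat.cast_one]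
    have e2 : (0:ℝ) < ((N - 1 : ℕ) : ℝ) := by
      have h3 : 0 < N - 1 := by omega
      exact_mod_cast h3
    rw [e1, ENNReal.ofReal_div_of_pos e2, ENNReal.ofReal_natCast, ENNReal.ofReal_natCast]
  rw [hcast]
  exact hfinal
end

section
/- The Tauberian constant of the one-sided discrete Hardy–Littlewood maximal operator on ℤ satisfies C̃⁺_HL(α) = 1/α for all α ∈ (0,1). -/
open MeasureTheory Set ENNReal

/-- The one-sided discrete Hardy–Littlewood maximal operator on `ℤ` applied to `χ_E`. -/
noncomputable def dosMax (E : Set ℤ) (m : ℤ) : ℝ :=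
  ⨆ N : {N : ℕ // 1 ≤ N},
    (∑ j ∈ Finset.range N.1, E.indicator (fun _ => (1:ℝ)) (m + (j : ℤ))) / (N.1 : ℝ)

private noncomputable def cnt (F : Finset ℤ) (m : ℤ) (N : ℕ) : ℕ :=
  (F ∩ Finset.Ico m (m + N)).card

private def Aset (α : ℝ) (F : Finset ℤ) : Set ℤ :=
  {m | ∃ N : ℕ, 1 ≤ N ∧ α * N < (cnt F m N : ℝ)}

private lemma sum_indicator_eq (F : Finset ℤ) (m : ℤ) (N : ℕ) :
    (∑ j ∈ Finset.range N, (↑F : Set ℤ).indicator (fun _ => (1:ℝ)) (m + (j : ℤ)))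
      = (cnt F m N : ℝ) := by
  classical
  have h1 : (∑ j ∈ Finset.range N, (↑F : Set ℤ).indicator (fun _ => (1:ℝ)) (m + (j : ℤ)))
      = ∑ x ∈ Finset.Ico m (m + N), (↑F : Set ℤ).indicator (fun _ => (1:ℝ)) x := by
    refine Finset.sum_nbij' (fun j => m + (j : ℤ)) (fun x => (x - m).toNat) ?_ ?_ ?_ ?_ ?_
    · intro j hj
      simp only [Finset.mem_range] at hj
      simp only [Finset.mem_Ico]
      omega
    · intro x hx
      simp only [Finset.mem_Ico] at hx
      simp only [Finset.mem_range]
      omega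
    · intro j hj; simp only [Finset.mem_range] at hj; simp
    · intro x hx; simp only [Finset.mem_Ico] at hx; simp; omega
    · intro j hj; rfl
  rw [h1]
  have h2 : ∀ x ∈ Finset.Ico m (m + N),
      (↑F : Set ℤ).indicator (fun _ => (1:ℝ)) x = if x ∈ F then 1 else 0 := by
    intro x _; simp [Set.indicator_apply]
  rw [Finset.sum_congr rfl h2, Finset.sum_boole]
  unfold cnt
  congr 1
  rw [Finset.inter_comm]
  rfl

private lemma mem_Aset_iff (α : ℝ) (hα : 0 < α) (F : Finset ℤ) (m : ℤ) :
    α < dosMax (↑F) m ↔ m ∈ Aset α F := by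
  have hbdd : BddAbove (Set.range (fun N : {N : ℕ // 1 ≤ N} =>
      (∑ j ∈ Finset.range N.1, (↑F : Set ℤ).indicator (fun _ => (1:ℝ)) (m + (j : ℤ))) / (N.1 : ℝ))) := by
    refine ⟨1, ?_⟩
    rintro x ⟨N, rfl⟩
    have hNpos : (0:ℝ) < (N.1 : ℝ) := by exact_mod_cast N.2
    rw [div_le_one hNpos, sum_indicator_eq]
    have : cnt F m N.1 ≤ N.1 := by
      unfold cnt
      calc (F ∩ Finset.Ico m (m + N.1)).card ≤ (Finset.Ico m (m + N.1)).card :=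
            Finset.card_le_card (Finset.inter_subset_right)
        _ = N.1 := by rw [Int.card_Ico]; omega
    exact_mod_cast this
  constructor
  · intro h
    obtain ⟨N, hN⟩ := exists_lt_of_lt_ciSup h
    refine ⟨N.1, N.2, ?_⟩
    have hNpos : (0:ℝ) < (N.1 : ℝ) := by exact_mod_cast N.2
    rw [sum_indicator_eq] at hN
    exact (lt_div_iff₀ hNpos).mp hN
  · rintro ⟨N, hN1, hN2⟩
    have hNpos : (0:ℝ) < (N : ℝ) := by exact_mod_cast hN1
    have h : α < (∑ j ∈ Finset.range N, (↑F : Set ℤ).indicator (fun _ => (1:ℝ)) (m + (j : ℤ))) / (N : ℝ) := by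
      rw [sum_indicator_eq, lt_div_iff₀ hNpos]
      linarith [hN2]
    exact lt_of_lt_of_le h (le_ciSup hbdd ⟨N, hN1⟩)
private lemma key (α : ℝ) (hα : 0 < α) :
    ∀ F B : Finset ℤ, ↑B ⊆ Aset α F → α * B.card ≤ (F.card : ℝ) := by
  intro F
  induction F using Finset.strongInduction with
  | _ F ih =>
    intro B hB
    classical
    rcases B.eq_empty_or_nonempty with rfl | hne
    · simp
    set a := B.min' hne with ha
    have haA : a ∈ Aset α F := hB (B.min'_mem hne)
    have hex : ∃ N : ℕ, 1 ≤ N ∧ α * N < (cnt F a N : ℝ) := haA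
    set N := Nat.find hex with hNdef
    obtain ⟨hN1, hNlt⟩ := Nat.find_spec hex
    set n := a + (N : ℤ) with hn
    set E' := F \ Finset.Ico a n with hE'
    have hcard : (F ∩ Finset.Ico a n).card + E'.card = F.card :=
      Finset.card_inter_add_card_sdiff F (Finset.Ico a n)
    have hcnt_eq : cnt F a N = (F ∩ Finset.Ico a n).card := rfl
    have hcnt_pos : 0 < (F ∩ Finset.Ico a n).card := by
      have h0 : (0:ℝ) < (cnt F a N : ℝ) := by
        have h1 : (1:ℝ) ≤ (N:ℝ) := by exact_mod_cast hN1
        nlinarith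
      rw [hcnt_eq] at h0
      exact_mod_cast h0
    have hEss : E' ⊂ F := by
      obtain ⟨x, hx⟩ := Finset.card_pos.mp hcnt_pos
      rw [Finset.mem_inter] at hx
      rw [Finset.ssubset_iff_of_subset (Finset.sdiff_subset)]
      exact ⟨x, hx.1, by simp [hE', hx.2]⟩
    -- B' : part of B at or beyond n
    set B' := B.filter (fun m => n ≤ m) with hB'def
    have hB'sub : ↑B' ⊆ Aset α E' := by
      intro m hm
      simp only [hB'def, Finset.coe_filter, Set.mem_setOf_eq] at hm
      obtain ⟨hmB, hnm⟩ := hm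
      obtain ⟨N', h1, h2⟩ := hB hmB
      refine ⟨N', h1, ?_⟩
      have hceq : cnt E' m N' = cnt F m N' := by
        unfold cnt
        congr 1
        ext x
        simp only [hE', Finset.mem_inter, Finset.mem_sdiff, Finset.mem_Ico]
        constructor
        · rintro ⟨⟨h3, _⟩, h5⟩; exact ⟨h3, h5⟩
        · rintro ⟨h3, h5⟩; exact ⟨⟨h3, by omega⟩, h5⟩
      rw [hceq]; exact h2
    have IH := ih E' hEss B' hB'sub
    -- elements of B below n
    have hsplit : (B.filter (fun m => ¬ n ≤ m)).card + B'.card = B.card := by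
      rw [hB'def, add_comm]
      exact Finset.card_filter_add_card_filter_not _
    have hlow : (B.filter (fun m => ¬ n ≤ m)).card ≤ N := by
      have hsub : B.filter (fun m => ¬ n ≤ m) ⊆ Finset.Ico a n := by
        intro m hm
        rw [Finset.mem_filter] at hm
        rw [Finset.mem_Ico]
        exact ⟨B.min'_le m hm.1, by omega⟩
      calc (B.filter (fun m => ¬ n ≤ m)).card ≤ (Finset.Ico a n).card :=
            Finset.card_le_card hsub
        _ = N := by rw [Int.card_Ico]; omega
    have hcast : (B.card : ℝ) = ((B.filter (fun m => ¬ n ≤ m)).card : ℝ) + (B'.card : ℝ) := by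
      exact_mod_cast hsplit.symm
    have hlowR : ((B.filter (fun m => ¬ n ≤ m)).card : ℝ) ≤ (N : ℝ) := by exact_mod_cast hlow
    have hcardR : ((F ∩ Finset.Ico a n).card : ℝ) + (E'.card : ℝ) = (F.card : ℝ) := by
      exact_mod_cast hcard
    have hcntR : α * (N : ℝ) < ((F ∩ Finset.Ico a n).card : ℝ) := by
      rw [← hcnt_eq]; exact_mod_cast hNlt
    nlinarith [hcast, hlowR, hcardR, hcntR, IH, (Nat.cast_nonneg B'.card : (0:ℝ) ≤ _)]

private lemma Aset_finite (α : ℝ) (hα : 0 < α) (F : Finset ℤ) : (Aset α F).Finite := by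
  by_contra h
  have hinf : (Aset α F).Infinite := h
  obtain ⟨k, hk⟩ := exists_nat_gt ((F.card : ℝ) / α)
  obtain ⟨B, hBsub, hBcard⟩ := hinf.exists_subset_card_eq k
  have h1 := key α hα F B hBsub
  rw [hBcard] at h1
  rw [div_lt_iff₀ hα] at hk
  nlinarith

/-- The Tauberian constant `C̃⁺_HL(α)` of the one-sided discrete Hardy–Littlewood maximal
operator. -/
noncomputable def dosTauber (α : ℝ) : ℝ≥0∞ :=
  ⨆ E : {E : Set ℤ // E.Finite ∧ E.Nonempty},
    ({m : ℤ | α < dosMax E.1 m}.encard : ℝ≥0∞) / (E.1.encard : ℝ≥0∞)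

private lemma upper_bound (α : ℝ) (hα : 0 < α) : dosTauber α ≤ ENNReal.ofReal (1 / α) := by
  rw [dosTauber]
  refine iSup_le ?_
  rintro ⟨E, hfin, hne⟩
  classical
  set F := hfin.toFinset with hF
  have hEF : E = ↑F := (hfin.coe_toFinset).symm
  have hset : {m : ℤ | α < dosMax E m} = Aset α F := by
    ext m
    rw [Set.mem_setOf_eq, hEF, mem_Aset_iff α hα]
  have hAfin := Aset_finite α hα F
  set AF := hAfin.toFinset with hAF
  have hAeq : Aset α F = ↑AF := hAfin.coe_toFinset.symm
  have hkey : α * (AF.card : ℝ) ≤ (F.card : ℝ) := key α hα F AF (by rw [← hAeq])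
  have hFne : F.Nonempty := by
    rw [hF]
    exact hfin.toFinset_nonempty.mpr hne
  have hFcard : F.card ≠ 0 := Finset.card_ne_zero_of_mem (hFne.choose_spec)
  show ({m : ℤ | α < dosMax E m}.encard : ℝ≥0∞) / (E.encard : ℝ≥0∞) ≤ ENNReal.ofReal (1 / α)
  rw [hset, hAeq, hEF, Set.encard_coe_eq_coe_finsetCard, Set.encard_coe_eq_coe_finsetCard,
    ENat.toENNReal_coe, ENat.toENNReal_coe]
  rw [ENNReal.div_le_iff (by exact_mod_cast hFcard) (ENNReal.natCast_ne_top _)]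
  calc (AF.card : ℝ≥0∞) = ENNReal.ofReal (AF.card : ℝ) := by
        rw [ENNReal.ofReal_natCast]
    _ ≤ ENNReal.ofReal ((1/α) * (F.card : ℝ)) := by
        apply ENNReal.ofReal_le_ofReal
        rw [div_mul_eq_mul_div, le_div_iff₀ hα, one_mul, mul_comm]
        exact hkey
    _ = ENNReal.ofReal (1/α) * ENNReal.ofReal ((F.card : ℝ)) := by
        rw [ENNReal.ofReal_mul (by positivity)]
    _ = ENNReal.ofReal (1/α) * (F.card : ℝ≥0∞) := by
        rw [ENNReal.ofReal_natCast]

private lemma lower_bound (α : ℝ) (hα : α ∈ Set.Ioo (0:ℝ) 1) :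
    ENNReal.ofReal (1 / α) ≤ dosTauber α := by
  obtain ⟨hα0, hα1⟩ := hα
  refine ENNReal.le_of_forall_pos_le_add ?_
  intro ε hε _
  obtain ⟨k, hk1, hεk⟩ : ∃ k : ℕ, 1 ≤ k ∧ 1 / (k:ℝ) ≤ (ε:ℝ) := by
    obtain ⟨k0, hk0⟩ := exists_nat_gt (1 / (ε : ℝ))
    refine ⟨k0 + 1, Nat.le_add_left 1 k0, ?_⟩
    have hεpos : (0:ℝ) < (ε:ℝ) := hε
    have h1 : 1 / (ε:ℝ) < ((k0 + 1 : ℕ):ℝ) := by push_cast; linarith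
    have h2 : (0:ℝ) < ((k0+1:ℕ):ℝ) := by positivity
    rw [div_le_iff₀ h2]
    rw [div_lt_iff₀ hεpos] at h1
    linarith
  have hkR : (0:ℝ) < (k:ℝ) := by exact_mod_cast hk1
  set F : Finset ℤ := Finset.Ico (0:ℤ) (k:ℤ) with hF
  have hfin : (↑F : Set ℤ).Finite := F.finite_toSet
  have hne : (↑F : Set ℤ).Nonempty := ⟨0, by simp [hF]; exact_mod_cast hk1⟩
  have hFcard : F.card = k := by rw [hF, Int.card_Ico]; omega
  set lo : ℤ := ⌊(k:ℝ) - (k:ℝ)/α⌋ + 1 with hlo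
  have hlor : (k:ℝ) - (k:ℝ)/α < (lo:ℝ) := by
    have h := Int.lt_floor_add_one ((k:ℝ) - (k:ℝ)/α)
    rw [hlo]; push_cast; linarith
  -- every m in [lo, k) is in the superlevel set
  have hS : ∀ m : ℤ, m ∈ Finset.Ico lo (k:ℤ) → α < dosMax (↑F) m := by
    intro m hm
    rw [Finset.mem_Ico] at hm
    obtain ⟨hm1, hm2⟩ := hm
    rw [mem_Aset_iff α hα0]
    set N : ℕ := ((k:ℤ) - m).toNat with hN
    have hN1 : 1 ≤ N := by omega
    refine ⟨N, hN1, ?_⟩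
    have hmN : m + (N : ℤ) = (k:ℤ) := by omega
    have hcnt : cnt F m N = ((k:ℤ) - max 0 m).toNat := by
      unfold cnt
      rw [hmN, hF, Finset.Ico_inter_Ico, min_self, Int.card_Ico]
    rw [hcnt]
    have hmr : (k:ℝ) - (k:ℝ)/α < (m:ℝ) := by
      have : (lo:ℝ) ≤ (m:ℝ) := by exact_mod_cast hm1
      linarith
    have hNz : (N:ℤ) = (k:ℤ) - m := by omega
    have hNr : (N:ℝ) = (k:ℝ) - (m:ℝ) := by exact_mod_cast hNz
    rcases le_or_gt 0 m with hm0 | hm0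
    · have hcz : ((((k:ℤ) - max 0 m).toNat : ℕ) : ℤ) = (k:ℤ) - m := by omega
      have hc : ((((k:ℤ) - max 0 m).toNat : ℕ) : ℝ) = (k:ℝ) - (m:ℝ) := by exact_mod_cast hcz
      rw [hc, hNr]
      have h1 : (1:ℝ) ≤ (k:ℝ) - (m:ℝ) := by
        have h2 : ((m:ℤ):ℝ) ≤ (((k:ℤ) - 1 : ℤ):ℝ) := by exact_mod_cast (by omega : m ≤ (k:ℤ) - 1)
        push_cast at h2
        linarith
      nlinarith
    · have hcz : ((((k:ℤ) - max 0 m).toNat : ℕ) : ℤ) = (k:ℤ) := by omega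
      have hc : ((((k:ℤ) - max 0 m).toNat : ℕ) : ℝ) = (k:ℝ) := by exact_mod_cast hcz
      rw [hc, hNr]
      have hfield : α * ((k:ℝ)/α) = (k:ℝ) := by field_simp
      nlinarith
  -- the term for this E
  have hterm : ((Finset.Ico lo (k:ℤ)).card : ℝ≥0∞) / (k : ℝ≥0∞) ≤ dosTauber α := by
    have h1 : (((Finset.Ico lo (k:ℤ)) : Set ℤ) : Set ℤ) ⊆ {m : ℤ | α < dosMax (↑F) m} := by
      intro m hm
      exact hS m (by exact_mod_cast hm)
    have h2 : ((Finset.Ico lo (k:ℤ)).card : ℕ∞) ≤ {m : ℤ | α < dosMax (↑F) m}.encard := by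
      rw [← Set.encard_coe_eq_coe_finsetCard]
      exact Set.encard_mono h1
    have h3 : ((Finset.Ico lo (k:ℤ)).card : ℝ≥0∞) ≤ ({m : ℤ | α < dosMax (↑F) m}.encard : ℝ≥0∞) := by
      rw [← ENat.toENNReal_coe]
      exact_mod_cast ENat.toENNReal_le.mpr h2
    have h4 : ((↑F : Set ℤ).encard : ℝ≥0∞) = (k : ℝ≥0∞) := by
      rw [Set.encard_coe_eq_coe_finsetCard, hFcard, ENat.toENNReal_coe]
    calc ((Finset.Ico lo (k:ℤ)).card : ℝ≥0∞) / (k : ℝ≥0∞)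
        ≤ ({m : ℤ | α < dosMax (↑F) m}.encard : ℝ≥0∞) / ((↑F : Set ℤ).encard : ℝ≥0∞) := by
          rw [h4]; exact ENNReal.div_le_div_right h3 _
      _ ≤ dosTauber α := by
          rw [dosTauber]
          exact le_iSup (fun E : {E : Set ℤ // E.Finite ∧ E.Nonempty} =>
            ({m : ℤ | α < dosMax E.1 m}.encard : ℝ≥0∞) / (E.1.encard : ℝ≥0∞)) ⟨↑F, hfin, hne⟩
  -- numeric lower bound on the term
  have hcardS : (k:ℝ)/α - 1 ≤ ((Finset.Ico lo (k:ℤ)).card : ℝ) := by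
    rw [Int.card_Ico]
    have h1 : ((k:ℤ) - lo : ℤ) ≤ ((((k:ℤ) - lo).toNat : ℕ) : ℤ) := Int.self_le_toNat _
    have h2 : (((k:ℤ) - lo : ℤ) : ℝ) ≤ (((((k:ℤ) - lo).toNat : ℕ) : ℤ) : ℝ) := by exact_mod_cast h1
    have hfl : (⌊(k:ℝ) - (k:ℝ)/α⌋ : ℝ) ≤ (k:ℝ) - (k:ℝ)/α := Int.floor_le _
    have h3 : (k:ℝ)/α - 1 ≤ (((k:ℤ) - lo : ℤ) : ℝ) := by
      rw [hlo]; push_cast; linarith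
    have h4 : (((((k:ℤ) - lo).toNat : ℕ) : ℤ) : ℝ) = ((((k:ℤ) - lo).toNat : ℕ) : ℝ) := by push_cast; ring
    linarith [h3, h2, h4.le, h4.ge]
  have hofr : ENNReal.ofReal (1/α - 1/(k:ℝ)) ≤ ((Finset.Ico lo (k:ℤ)).card : ℝ≥0∞) / (k : ℝ≥0∞) := by
    have heq : ((Finset.Ico lo (k:ℤ)).card : ℝ≥0∞) / (k : ℝ≥0∞)
        = ENNReal.ofReal (((Finset.Ico lo (k:ℤ)).card : ℝ) / (k:ℝ)) := by
      rw [ENNReal.ofReal_div_of_pos hkR, ENNReal.ofReal_natCast, ENNReal.ofReal_natCast]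
    rw [heq]
    apply ENNReal.ofReal_le_ofReal
    rw [le_div_iff₀ hkR]
    have hexp : (1/α - 1/(k:ℝ)) * (k:ℝ) = (k:ℝ)/α - 1 := by
      field_simp
    linarith [hcardS, hexp.le, hexp.ge]
  calc ENNReal.ofReal (1/α)
      = ENNReal.ofReal ((1/α - 1/(k:ℝ)) + 1/(k:ℝ)) := by norm_num
    _ ≤ ENNReal.ofReal (1/α - 1/(k:ℝ)) + ENNReal.ofReal (1/(k:ℝ)) := ENNReal.ofReal_add_le
    _ ≤ dosTauber α + (ε : ℝ≥0∞) := by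
        gcongr
        · exact le_trans hofr hterm
        · calc ENNReal.ofReal (1/(k:ℝ)) ≤ ENNReal.ofReal (ε:ℝ) := ENNReal.ofReal_le_ofReal hεk
            _ = (ε : ℝ≥0∞) := ENNReal.ofReal_coe_nnreal

/-- The Tauberian constant of the one-sided discrete Hardy–Littlewood maximal operator on `ℤ`
satisfies `C̃⁺_HL(α) = 1/α` for all `α ∈ (0,1)`. -/
theorem stmt14 (α : ℝ) (hα : α ∈ Set.Ioo (0:ℝ) 1) :
    dosTauber α = ENNReal.ofReal (1 / α) :=
  le_antisymm (upper_bound α hα.1) (lower_bound α hα)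
end

section
/- For the transformation T(x) = (x + 1/2) mod 1 on [0,1) with Lebesgue measure, the one-sided ergodic Tauberian constants satisfy C*⁺_T(α) = 2 for 0 < α < 1/2 and C*⁺_T(α) = 1 for 1/2 ≤ α < 1; in particular C*⁺_T is not continuous on (0,1). -/
open MeasureTheory Set ENNReal

/-- The transformation `T(x) = (x + 1/2) mod 1` on `[0,1)`, as a bijection of `[0,1)`. -/
noncomputable def halfRot : Equiv.Perm ↥(Set.Ico (0:ℝ) 1) :=
  Function.Involutive.toPerm
    (fun x => ⟨Int.fract (x.1 + 1/2),
      Set.mem_Ico.mpr ⟨Int.fract_nonneg _, Int.fract_lt_one _⟩⟩)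
    (by
      intro x
      apply Subtype.ext
      show Int.fract (Int.fract (x.1 + 1/2) + 1/2) = x.1
      have h : Int.fract (x.1 + 1/2) + 1/2 = (x.1 + ((1:ℤ):ℝ)) - (⌊x.1 + 1/2⌋ : ℤ) := by
        rw [Int.fract]; push_cast; ring
      rw [h, Int.fract_sub_intCast, Int.fract_add_intCast, Int.fract_eq_self.2 ⟨x.2.1, x.2.2⟩])

/-- Lebesgue measure on `[0,1)`. -/
noncomputable def μ01 : Measure ↥(Set.Ico (0:ℝ) 1) := volume.comap Subtype.val
/-- The one-sided ergodic maximal operator `T*⁺` applied to `χ_E`. -/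
noncomputable def osMax {Ω : Type*} (T : Ω → Ω) (E : Set Ω) (ω : Ω) : ℝ :=
  ⨆ N : ℕ, (∑ j ∈ Finset.range (N + 1), E.indicator (fun _ => (1:ℝ)) (T^[j] ω)) / ((N : ℝ) + 1)

/-- The Tauberian constant `C*⁺_T(α)` of the one-sided ergodic maximal operator. -/
noncomputable def osTauber {Ω : Type*} [MeasurableSpace Ω] (μ : Measure Ω) (T : Ω → Ω)
    (α : ℝ) : ℝ≥0∞ :=
  ⨆ E : {E : Set Ω // MeasurableSet E ∧ 0 < μ E}, μ {ω | α < osMax T E.1 ω} / μ E.1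

open Filter Topology

/-! ### Auxiliary lemmas -/

lemma halfRot_invol : Function.Involutive (⇑halfRot) := fun x => halfRot.symm_apply_apply x

lemma halfRot_coe (x : ↥(Set.Ico (0:ℝ) 1)) : (halfRot x : ℝ) = Int.fract (x.1 + 1/2) := rfl

lemma fract_half {x : ℝ} (hx : x ∈ Set.Ico (0:ℝ) 1) :
    Int.fract (x + 1/2) = if x < 1/2 then x + 1/2 else x - 1/2 := by
  rcases lt_or_ge x (1/2) with h | h
  · rw [if_pos h, Int.fract_eq_self.2 ⟨by linarith [hx.1], by linarith⟩]
  · rw [if_neg (not_lt.2 h)]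
    have h2 : x + 1/2 = (x - 1/2) + ((1:ℤ):ℝ) := by push_cast; ring
    rw [h2, Int.fract_add_intCast, Int.fract_eq_self.2 ⟨by linarith, by linarith [hx.2]⟩]

lemma μ01_apply {S : Set ↥(Set.Ico (0:ℝ) 1)} (hS : MeasurableSet S) :
    μ01 S = volume (Subtype.val '' S) :=
  Measure.comap_apply _ Subtype.coe_injective
    (fun _ hs => (MeasurableEmbedding.subtype_coe measurableSet_Ico).measurableSet_image' hs) _ hS

lemma μ01_univ : μ01 univ = 1 := by
  rw [μ01_apply MeasurableSet.univ, image_univ, Subtype.range_coe]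
  simp [Real.volume_Ico]

lemma μ01_ne_top (E : Set ↥(Set.Ico (0:ℝ) 1)) : μ01 E ≠ ⊤ :=
  ((measure_mono (subset_univ E)).trans_lt (by rw [μ01_univ]; exact one_lt_top)).ne

lemma measurable_halfRot : Measurable (⇑halfRot) :=
  (measurable_fract.comp (measurable_subtype_coe.add_const (1/2))).subtype_mk

instance : Nonempty {E : Set ↥(Set.Ico (0:ℝ) 1) // MeasurableSet E ∧ 0 < μ01 E} :=
  ⟨⟨univ, MeasurableSet.univ, by rw [μ01_univ]; exact zero_lt_one⟩⟩

lemma μ01_preimage_halfRot {S : Set ↥(Set.Ico (0:ℝ) 1)} (hS : MeasurableSet S) :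
    μ01 ((⇑halfRot) ⁻¹' S) = μ01 S := by
  set A : Set ℝ := Subtype.val '' S with hA
  have hAmeas : MeasurableSet A :=
    (MeasurableEmbedding.subtype_coe measurableSet_Ico).measurableSet_image' hS
  have hAsub : A ⊆ Set.Ico (0:ℝ) 1 := by rintro _ ⟨ω, _, rfl⟩; exact ω.2
  have hmemA : ∀ ω : ↥(Set.Ico (0:ℝ) 1), ω ∈ S ↔ (ω : ℝ) ∈ A :=
    fun ω => (Subtype.coe_injective.mem_set_image).symm
  set B₁ : Set ℝ := (fun x => x + (1/2:ℝ)) ⁻¹' (A ∩ Set.Ico (1/2) 1) with hB₁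
  set B₂ : Set ℝ := (fun x => x + (-(1/2):ℝ)) ⁻¹' (A ∩ Set.Ico 0 (1/2)) with hB₂
  have himg : Subtype.val '' ((⇑halfRot) ⁻¹' S) = B₁ ∪ B₂ := by
    ext x
    constructor
    · rintro ⟨ω, hω, rfl⟩
      have hmem : Int.fract ((ω:ℝ) + 1/2) ∈ A := by
        rw [← halfRot_coe]
        exact (hmemA _).1 hω
      rw [fract_half ω.2] at hmem
      rcases lt_or_ge (ω:ℝ) (1/2) with h | h
      · rw [if_pos h] at hmem
        exact Or.inl ⟨hmem, by constructor <;> [linarith [ω.2.1]; linarith]⟩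
      · rw [if_neg (not_lt.2 h)] at hmem
        exact Or.inr ⟨hmem, by constructor <;> [linarith; linarith [ω.2.2]]⟩
    · rintro (⟨hmem, hI⟩ | ⟨hmem, hI⟩)
      · simp only [Set.mem_Ico] at hI
        have hx : x ∈ Set.Ico (0:ℝ) 1 := ⟨by linarith [hI.1], by linarith [hI.2]⟩
        refine ⟨⟨x, hx⟩, ?_, rfl⟩
        rw [Set.mem_preimage, hmemA, halfRot_coe]
        show Int.fract (x + 1/2) ∈ A
        rw [fract_half hx, if_pos (by linarith [hI.1])]
        exact hmem
      · simp only [Set.mem_Ico] at hI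
        have hx : x ∈ Set.Ico (0:ℝ) 1 := ⟨by linarith [hI.1], by linarith [hI.2]⟩
        refine ⟨⟨x, hx⟩, ?_, rfl⟩
        rw [Set.mem_preimage, hmemA, halfRot_coe]
        show Int.fract (x + 1/2) ∈ A
        rw [fract_half hx, if_neg (by push_neg; linarith [hI.1])]
        have : x - 1/2 = x + -(1/2) := by ring
        rw [this]
        exact hmem
  have hvolB₁ : volume B₁ = volume (A ∩ Set.Ico (1/2) 1) :=
    (measurePreserving_add_right volume (1/2)).measure_preimage
      ((hAmeas.inter measurableSet_Ico).nullMeasurableSet)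
  have hvolB₂ : volume B₂ = volume (A ∩ Set.Ico 0 (1/2)) :=
    (measurePreserving_add_right volume (-(1/2))).measure_preimage
      ((hAmeas.inter measurableSet_Ico).nullMeasurableSet)
  have hdisj : Disjoint B₁ B₂ := by
    rw [Set.disjoint_left]
    rintro x ⟨_, h1⟩ ⟨_, h2⟩
    simp only [Set.mem_Ico] at h1 h2
    linarith [h1.1, h2.2]
  have hB₂meas : MeasurableSet B₂ :=
    (measurable_add_const _) (hAmeas.inter measurableSet_Ico)
  have hsplit : volume (A ∩ Set.Ico (1/2) 1) + volume (A ∩ Set.Ico 0 (1/2)) = volume A := by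
    have hdiff : A \ Set.Ico (1/2) 1 = A ∩ Set.Ico 0 (1/2) := by
      ext x
      simp only [Set.mem_diff, Set.mem_inter_iff, Set.mem_Ico]
      constructor
      · rintro ⟨hxA, hnot⟩
        have := hAsub hxA
        simp only [Set.mem_Ico] at this
        refine ⟨hxA, this.1, ?_⟩
        by_contra hc
        exact hnot ⟨by linarith [not_lt.1 hc], this.2⟩
      · rintro ⟨hxA, _, hlt⟩
        exact ⟨hxA, fun hc => by linarith [hc.1]⟩
    rw [← hdiff]
    exact measure_inter_add_diff A measurableSet_Ico
  rw [μ01_apply (measurable_halfRot hS), μ01_apply hS, himg,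
    measure_union hdisj hB₂meas, hvolB₁, hvolB₂, hsplit]

lemma sum_if_even (n : ℕ) :
    ∑ j ∈ Finset.range n, (if Even j then (0:ℝ) else 1) = ((n/2 : ℕ) : ℝ) := by
  induction n with
  | zero => simp
  | succ n ih =>
    rw [Finset.sum_range_succ, ih]
    rcases Nat.even_or_odd n with h | h
    · rw [if_pos h]
      have : (n+1)/2 = n/2 := by rcases h with ⟨k, rfl⟩; omega
      rw [this]; ring
    · rw [if_neg (by simpa using h)]
      have : (n+1)/2 = n/2 + 1 := by rcases h with ⟨k, rfl⟩; omega
      rw [this]; push_cast; ring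

open scoped Classical in
lemma osMax_invol {Ω : Type*} {T : Ω → Ω} (hT : Function.Involutive T) (E : Set Ω) (ω : Ω) :
    osMax T E ω = if ω ∈ E then 1 else if T ω ∈ E then 1/2 else 0 := by
  classical
  have hiter : ∀ j : ℕ, T^[j] ω = if Even j then ω else T ω := by
    intro j
    rcases Nat.even_or_odd j with h | h
    · rw [hT.iterate_even h, if_pos h, id_eq]
    · rw [hT.iterate_odd h, if_neg (by simpa using h)]
  have hind : ∀ j : ℕ, E.indicator (fun _ => (1:ℝ)) (T^[j] ω)
      = if Even j then (if ω ∈ E then (1:ℝ) else 0) else (if T ω ∈ E then 1 else 0) := by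
    intro j
    rw [hiter j]
    split_ifs <;> simp_all [Set.indicator_apply]
  set g : ℕ → ℝ := fun N =>
    (∑ j ∈ Finset.range (N + 1), E.indicator (fun _ => (1:ℝ)) (T^[j] ω)) / ((N : ℝ) + 1) with hg
  have hNpos : ∀ N : ℕ, (0:ℝ) < (N:ℝ) + 1 := fun N => by positivity
  by_cases h1 : ω ∈ E
  · have hub : ∀ N, g N ≤ 1 := by
      intro N
      rw [hg]
      apply div_le_one_of_le₀ _ (hNpos N).le
      calc ∑ j ∈ Finset.range (N + 1), E.indicator (fun _ => (1:ℝ)) (T^[j] ω)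
          ≤ ∑ j ∈ Finset.range (N + 1), (1:ℝ) := by
            apply Finset.sum_le_sum
            intro j _
            rw [hind j]; split_ifs <;> norm_num
        _ = (N:ℝ) + 1 := by simp
    have hval : g 0 = 1 := by
      rw [hg]; simp [hind 0, h1]
    rw [if_pos h1, osMax]
    apply le_antisymm
    · exact ciSup_le hub
    · exact le_trans (le_of_eq hval.symm)
        (le_ciSup (f := g) ⟨1, by rintro y ⟨N, rfl⟩; exact hub N⟩ 0)
  · rw [if_neg h1]
    by_cases h2 : T ω ∈ E
    · have hub : ∀ N, g N ≤ 1/2 := by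
        intro N
        rw [hg, div_le_iff₀ (hNpos N)]
        calc ∑ j ∈ Finset.range (N + 1), E.indicator (fun _ => (1:ℝ)) (T^[j] ω)
            = ∑ j ∈ Finset.range (N + 1), (if Even j then (0:ℝ) else 1) := by
              apply Finset.sum_congr rfl
              intro j _
              rw [hind j]; split_ifs <;> simp_all
          _ = (((N+1)/2 : ℕ) : ℝ) := sum_if_even (N+1)
          _ ≤ ((N:ℝ) + 1)/2 := by
              have := Nat.cast_div_le (α := ℝ) (m := N+1) (n := 2)
              push_cast at this ⊢
              linarith
          _ = 1/2 * ((N:ℝ) + 1) := by ring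
      have hval : g 1 = 1/2 := by
        rw [hg]
        dsimp only
        rw [Finset.sum_range_succ, Finset.sum_range_one, hind 0, hind 1]
        norm_num [h1, h2]
      rw [if_pos h2, osMax]
      apply le_antisymm
      · exact ciSup_le hub
      · exact le_trans (le_of_eq hval.symm)
          (le_ciSup (f := g) ⟨1/2, by rintro y ⟨N, rfl⟩; exact hub N⟩ 1)
    · rw [if_neg h2, osMax]
      have : ∀ N, g N = 0 := by
        intro N
        rw [hg]
        have : ∑ j ∈ Finset.range (N + 1), E.indicator (fun _ => (1:ℝ)) (T^[j] ω) = 0 := by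
          apply Finset.sum_eq_zero
          intro j _
          rw [hind j]; split_ifs <;> simp_all
        dsimp only
        rw [this, zero_div]
      simp only [hg] at this
      simp [this]

lemma osTauber_lt_half {α : ℝ} (hα0 : 0 < α) (hα : α < 1/2) :
    osTauber μ01 (⇑halfRot) α = 2 := by
  classical
  rw [osTauber]
  apply le_antisymm
  · apply iSup_le
    rintro ⟨E, hEm, hEpos⟩
    have hsub : {ω | α < osMax (⇑halfRot) E ω} ⊆ E ∪ (⇑halfRot) ⁻¹' E := by
      intro ω hω
      by_contra hc
      rw [Set.mem_union] at hc
      push_neg at hc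
      simp only [Set.mem_setOf_eq, osMax_invol halfRot_invol] at hω
      rw [if_neg hc.1, if_neg (fun h => hc.2 (Set.mem_preimage.2 h))] at hω
      linarith
    refine ENNReal.div_le_of_le_mul ?_
    calc μ01 {ω | α < osMax (⇑halfRot) E ω}
        ≤ μ01 (E ∪ (⇑halfRot) ⁻¹' E) := measure_mono hsub
      _ ≤ μ01 E + μ01 ((⇑halfRot) ⁻¹' E) := measure_union_le _ _
      _ = 2 * μ01 E := by rw [μ01_preimage_halfRot hEm, two_mul]
  · set E₀ : Set ↥(Set.Ico (0:ℝ) 1) := {ω | (ω:ℝ) < 1/2} with hE₀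
    have hE₀m : MeasurableSet E₀ := measurable_subtype_coe measurableSet_Iio
    have hE₀img : Subtype.val '' E₀ = Set.Ico (0:ℝ) (1/2) := by
      ext x
      constructor
      · rintro ⟨ω, hω, rfl⟩; exact ⟨ω.2.1, hω⟩
      · rintro ⟨h0, h1⟩; exact ⟨⟨x, h0, by linarith⟩, h1, rfl⟩
    have hE₀vol : μ01 E₀ = ENNReal.ofReal (1/2) := by
      rw [μ01_apply hE₀m, hE₀img, Real.volume_Ico]; norm_num
    have hpos : 0 < μ01 E₀ := by rw [hE₀vol]; exact ENNReal.ofReal_pos.2 (by norm_num)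
    have hset : {ω | α < osMax (⇑halfRot) E₀ ω} = univ := by
      ext ω
      simp only [Set.mem_setOf_eq, Set.mem_univ, iff_true, osMax_invol halfRot_invol]
      rcases lt_or_ge (ω:ℝ) (1/2) with h | h
      · rw [if_pos (show ω ∈ E₀ from h)]; linarith
      · rw [if_neg (show ω ∉ E₀ from not_lt.2 h), if_pos ?mem]
        · linarith
        case mem =>
          show (halfRot ω : ℝ) < 1/2
          rw [halfRot_coe, fract_half ω.2, if_neg (not_lt.2 h)]
          linarith [ω.2.2]
    have hratio : (1:ℝ≥0∞) / ENNReal.ofReal (1/2) = 2 := by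
      rw [ENNReal.ofReal_div_of_pos (by norm_num), ENNReal.ofReal_one, ENNReal.ofReal_ofNat]
      simp [ENNReal.div_eq_inv_mul]
    calc (2:ℝ≥0∞) = μ01 {ω | α < osMax (⇑halfRot) E₀ ω} / μ01 E₀ := by
          rw [hset, μ01_univ, hE₀vol, hratio]
      _ ≤ _ := le_iSup
          (fun E : {E : Set ↥(Set.Ico (0:ℝ) 1) // MeasurableSet E ∧ 0 < μ01 E} =>
            μ01 {ω | α < osMax (⇑halfRot) E.1 ω} / μ01 E.1) ⟨E₀, hE₀m, hpos⟩

lemma osTauber_ge_half {α : ℝ} (h1 : 1/2 ≤ α) (h2 : α < 1) :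
    osTauber μ01 (⇑halfRot) α = 1 := by
  have key : ∀ E : {E : Set ↥(Set.Ico (0:ℝ) 1) // MeasurableSet E ∧ 0 < μ01 E},
      μ01 {ω | α < osMax (⇑halfRot) E.1 ω} / μ01 E.1 = 1 := by
    rintro ⟨E, hEm, hEpos⟩
    have hset : {ω | α < osMax (⇑halfRot) E ω} = E := by
      ext ω
      simp only [Set.mem_setOf_eq, osMax_invol halfRot_invol]
      split_ifs with ha hb
      · exact iff_of_true h2 ha
      · exact iff_of_false (not_lt.2 h1) ha
      · exact iff_of_false (by linarith) ha
    show μ01 {ω | α < osMax (⇑halfRot) E ω} / μ01 E = 1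
    rw [hset]
    exact ENNReal.div_self hEpos.ne' (μ01_ne_top E)
  rw [osTauber]
  exact (iSup_congr key).trans iSup_const

/-- For `T(x) = (x + 1/2) mod 1` on `[0,1)` with Lebesgue measure, the one-sided ergodic
Tauberian constants satisfy `C*⁺_T(α) = 2` for `0 < α < 1/2` and `C*⁺_T(α) = 1` for
`1/2 ≤ α < 1`; in particular `C*⁺_T` is not continuous on `(0,1)`. -/
theorem stmt16 :
    (∀ α : ℝ, 0 < α → α < 1/2 → osTauber μ01 (⇑halfRot) α = 2) ∧
      (∀ α : ℝ, 1/2 ≤ α → α < 1 → osTauber μ01 (⇑halfRot) α = 1) ∧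
      ¬ ContinuousOn (fun α => (osTauber μ01 (⇑halfRot) α).toReal) (Set.Ioo 0 1) := by
  refine ⟨fun α h1 h2 => osTauber_lt_half h1 h2, fun α h1 h2 => osTauber_ge_half h1 h2, ?_⟩
  intro hc
  set f : ℝ → ℝ := fun α => (osTauber μ01 (⇑halfRot) α).toReal with hf
  have hmem : (1/2 : ℝ) ∈ Set.Ioo (0:ℝ) 1 := by norm_num
  have hcw : ContinuousWithinAt f (Set.Ioo 0 1) (1/2) := hc _ hmem
  have hmono : 𝓝[Set.Ioo (0:ℝ) (1/2)] (1/2 : ℝ) ≤ 𝓝[Set.Ioo (0:ℝ) 1] (1/2 : ℝ) :=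
    nhdsWithin_mono _ (fun x hx => ⟨hx.1, by linarith [hx.2]⟩)
  have hne : (𝓝[Set.Ioo (0:ℝ) (1/2)] (1/2 : ℝ)).NeBot := by
    apply mem_closure_iff_nhdsWithin_neBot.1
    rw [closure_Ioo (by norm_num : (0:ℝ) ≠ 1/2)]
    exact ⟨by norm_num, le_refl _⟩
  have hfval : f (1/2) = 1 := by
    show (osTauber μ01 (⇑halfRot) (1/2)).toReal = 1
    rw [osTauber_ge_half le_rfl (by norm_num)]
    simp
  have ht1 : Filter.Tendsto f (𝓝[Set.Ioo (0:ℝ) (1/2)] (1/2 : ℝ)) (𝓝 1) := by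
    have ht := hcw.mono_left hmono
    rwa [hfval] at ht
  have ht2 : Filter.Tendsto f (𝓝[Set.Ioo (0:ℝ) (1/2)] (1/2 : ℝ)) (𝓝 2) := by
    have heq : ∀ x ∈ Set.Ioo (0:ℝ) (1/2), f x = 2 := by
      intro x hx
      show (osTauber μ01 (⇑halfRot) x).toReal = 2
      rw [osTauber_lt_half hx.1 hx.2]
      simp
    refine Filter.Tendsto.congr' ?_ tendsto_const_nhds
    filter_upwards [self_mem_nhdsWithin] with x hx
    exact (heq x hx).symm
  have := tendsto_nhds_unique ht1 ht2
  norm_num at this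
end
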